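/- arXiv:2605.24933 — 2 statements merged into one kernel-verified Lean document; each statement's English description precedes it below -/
import Mathlib

section
/- For any finite simple graph G, the unrestricted scattering number sc*(G) := max over S ⊆ V(G) of (c_G(S) − |S|) satisfies sc*(G) ≤ π(G), where c_G(S) is the number of connected components of G \ S and π(G) is the path covering number of G. -/
open SimpleGraph

/-- Number of connected components of the induced subgraph of `G` on the
complement of `S`. -/
noncomputable def numComp {V : Type*} [Fintype V] (G : SimpleGraph V) (S : Finset V) : ℕ :=
  Nat.card (G.induce ((S : Set V)ᶜ)).ConnectedComponent

/-- A graph is a linear forest if it is acyclic and every vertex has degree at most 2,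
equivalently every connected component is a path. -/
def IsLinearForest {V : Type*} (H : SimpleGraph V) : Prop :=
  H.IsAcyclic ∧ ∀ v : V, (H.neighborSet v).ncard ≤ 2

/-- The path covering number: the minimum number of connected components of a
spanning linear forest of `G`, i.e. the minimum number of vertex-disjoint paths
covering all vertices of `G`. -/
noncomputable def pathCoverNumber {V : Type*} [Fintype V] (G : SimpleGraph V) : ℕ :=
  sInf {k | ∃ H ≤ G, IsLinearForest H ∧ Nat.card H.ConnectedComponent = k}

/-- The maximum number of edges of a linear forest contained in `G`. -/
noncomputable def LF {V : Type*} [Fintype V] (G : SimpleGraph V) : ℕ :=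
  sSup {m | ∃ H ≤ G, IsLinearForest H ∧ H.edgeSet.ncard = m}

/-- The unrestricted scattering number `sc*(G) = max_{S ⊆ V} (c_G(S) - |S|)`. -/
noncomputable def scStar {V : Type*} [Fintype V] (G : SimpleGraph V) : ℤ :=
  Finset.univ.sup' Finset.univ_nonempty
    (fun S : Finset V => (numComp G S : ℤ) - S.card)

section Aux

variable {V : Type*}

/-- Delete all edges incident to a vertex in `S` (vertices stay). -/
private def delS (K : SimpleGraph V) (S : Set V) : SimpleGraph V where
  Adj x y := K.Adj x y ∧ x ∉ S ∧ y ∉ S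
  symm := ⟨fun _ _ ⟨h, hx, hy⟩ => ⟨h.symm, hy, hx⟩⟩
  loopless := ⟨fun x ⟨h, _, _⟩ => K.loopless.irrefl x h⟩

private lemma delS_le (K : SimpleGraph V) (S : Set V) : delS K S ≤ K :=
  fun _ _ h => h.1

private lemma card_comp_le_of_le [Finite V] {K K' : SimpleGraph V} (h : K ≤ K') :
    Nat.card K'.ConnectedComponent ≤ Nat.card K.ConnectedComponent := by
  apply Nat.card_le_card_of_surjective (ConnectedComponent.map (Hom.ofLE h))
  intro c
  refine c.ind (fun v => ?_)
  exact ⟨K.connectedComponentMk v, rfl⟩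

private lemma reach_delS {K : SimpleGraph V} {S : Set V} {x y : V} (p : K.Walk x y)
    (hp : ∀ v ∈ p.support, v ∉ S) : (delS K S).Reachable x y := by
  refine ⟨p.transfer (delS K S) ?_⟩
  intro e he
  induction e using Sym2.ind with
  | _ a b =>
    rw [SimpleGraph.mem_edgeSet]
    exact ⟨p.edges_subset_edgeSet he, hp a (p.fst_mem_support_of_mem_edges he),
      hp b (p.snd_mem_support_of_mem_edges he)⟩

private lemma reach_nbhd {K : SimpleGraph V} {v : V} :
    ∀ (n : ℕ) {x : V} (p : K.Walk v x), p.length ≤ n → x ≠ v →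
      ∃ u, K.Adj v u ∧ (delS K {v}).Reachable u x := by
  classical
  intro n
  induction n with
  | zero =>
    intro x p hl hx
    cases p with
    | nil => exact absurd rfl hx
    | cons h q => simp at hl
  | succ n ih =>
    intro x p hl hx
    cases p with
    | nil => exact absurd rfl hx
    | cons h q =>
      by_cases hv : v ∈ q.support
      · have hq : q.length ≤ n := by
          have h2 : q.length + 1 ≤ n + 1 := by simpa using hl
          omega
        exact ih (q.dropUntil v hv) (le_trans (Walk.length_dropUntil_le q hv) hq) hx
      · refine ⟨_, h, reach_delS q ?_⟩
        intro w hw hws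
        rw [Set.mem_singleton_iff] at hws
        subst hws
        exact hv hw

private lemma delS_isolated {K : SimpleGraph V} {S : Set V} {s y : V} (hs : s ∈ S)
    (h : (delS K S).Reachable s y) : s = y := by
  obtain ⟨p⟩ := h
  cases p with
  | nil => rfl
  | cons h q => exact absurd hs h.2.1

private lemma card_le_of_fibers {A B : Type*} [Finite A] [Finite B] [Nonempty B]
    (φ : A → B) (b0 : B)
    (h1 : ∀ a a', φ a = φ a' → φ a ≠ b0 → a = a')
    (h2 : {a | φ a = b0}.ncard ≤ 3) :
    Nat.card A ≤ Nat.card B + 2 := by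
  have key := Set.ncard_add_ncard_compl {a | φ a = b0}
  have hinj : Set.InjOn φ {a | φ a = b0}ᶜ := fun a ha a' _ he => h1 a a' he ha
  have h3 : ({a | φ a = b0}ᶜ : Set A).ncard = (φ '' {a | φ a = b0}ᶜ).ncard :=
    (Set.ncard_image_of_injOn hinj).symm
  have h4 : (φ '' {a | φ a = b0}ᶜ) ⊆ ({b0}ᶜ : Set B) := by
    rintro b ⟨a, ha, rfl⟩
    exact ha
  have h5 : (φ '' {a | φ a = b0}ᶜ).ncard ≤ ({b0}ᶜ : Set B).ncard :=
    Set.ncard_le_ncard h4 (Set.toFinite _)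
  have h6 := Set.ncard_add_ncard_compl ({b0} : Set B)
  rw [Set.ncard_singleton] at h6
  have hB : 1 ≤ Nat.card B := Nat.one_le_iff_ne_zero.mpr (Nat.card_ne_zero.mpr ⟨‹_›, ‹_›⟩)
  omega

private lemma step_lemma [Finite V] [Nonempty V] (K : SimpleGraph V) (v : V)
    (hd : (K.neighborSet v).ncard ≤ 2) :
    Nat.card (delS K {v}).ConnectedComponent ≤ Nat.card K.ConnectedComponent + 2 := by
  classical
  haveI : Nonempty K.ConnectedComponent :=
    ⟨K.connectedComponentMk (Classical.arbitrary V)⟩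
  set φ : (delS K {v}).ConnectedComponent → K.ConnectedComponent :=
    ConnectedComponent.map (Hom.ofLE (delS_le K {v})) with hφ
  apply card_le_of_fibers φ (K.connectedComponentMk v)
  · intro a a'
    refine ConnectedComponent.ind₂ (fun x y he hne => ?_) a a'
    have hr : K.Reachable x y := ConnectedComponent.exact he
    obtain ⟨p⟩ := hr
    have hv : v ∉ p.support := by
      intro hvp
      apply hne
      exact ConnectedComponent.sound ⟨p.takeUntil v hvp⟩
    refine ConnectedComponent.sound (reach_delS p ?_)
    intro w hw hws
    rw [Set.mem_singleton_iff] at hws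
    subst hws
    exact hv hw
  · have hsub : {a | φ a = K.connectedComponentMk v} ⊆
        (fun u => (delS K {v}).connectedComponentMk u) '' (insert v (K.neighborSet v)) := by
      intro a
      refine a.ind (fun x ha => ?_)
      rcases eq_or_ne x v with rfl | hx
      · exact ⟨x, Set.mem_insert _ _, rfl⟩
      · have hr : K.Reachable x v := ConnectedComponent.exact ha
        obtain ⟨p⟩ := hr.symm
        obtain ⟨u, hu, hru⟩ := reach_nbhd p.length p le_rfl hx
        exact ⟨u, Set.mem_insert_of_mem _ hu, ConnectedComponent.sound hru⟩
    calc {a | φ a = K.connectedComponentMk v}.ncard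
        ≤ ((fun u => (delS K {v}).connectedComponentMk u) ''
            (insert v (K.neighborSet v))).ncard := Set.ncard_le_ncard hsub (Set.toFinite _)
      _ ≤ (insert v (K.neighborSet v)).ncard := Set.ncard_image_le (Set.toFinite _)
      _ ≤ (K.neighborSet v).ncard + 1 := Set.ncard_insert_le _ _
      _ ≤ 3 := by omega

private lemma delS_card [Finite V] [Nonempty V] (H : SimpleGraph V)
    (hH : ∀ v, (H.neighborSet v).ncard ≤ 2) (S : Finset V) [DecidableEq V] :
    Nat.card (delS H ↑S).ConnectedComponent ≤ Nat.card H.ConnectedComponent + 2 * S.card := by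
  induction S using Finset.induction with
  | empty =>
    have hEq : delS H (↑(∅ : Finset V)) = H := by
      ext x y
      simp [delS]
    rw [hEq]
    simp
  | @insert a S ha ih =>
    have hEq : delS H ↑(insert a S) = delS (delS H ↑S) {a} := by
      ext x y
      simp only [delS, Finset.coe_insert, Set.mem_insert_iff, Finset.mem_coe,
        Set.mem_singleton_iff]
      tauto
    have hdeg : ((delS H ↑S).neighborSet a).ncard ≤ 2 :=
      le_trans (Set.ncard_le_ncard (fun u hu => hu.1) (Set.toFinite _)) (hH a)
    rw [hEq]
    calc Nat.card (delS (delS H ↑S) {a}).ConnectedComponent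
        ≤ Nat.card (delS H ↑S).ConnectedComponent + 2 := step_lemma _ a hdeg
      _ ≤ Nat.card H.ConnectedComponent + 2 * S.card + 2 := by omega
      _ = Nat.card H.ConnectedComponent + 2 * (insert a S).card := by
          rw [Finset.card_insert_of_notMem ha]; ring

private lemma delS_walk_reach {K : SimpleGraph V} {S : Set V} :
    ∀ {x y : V} (_ : (delS K S).Walk x y) (hx : x ∈ Sᶜ) (hy : y ∈ Sᶜ),
      (K.induce Sᶜ).Reachable ⟨x, hx⟩ ⟨y, hy⟩ := by
  intro x y p
  induction p with
  | nil => intro hx hy; exact Reachable.refl _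
  | @cons u w y h q ih =>
    intro hx hy
    have hw : w ∈ Sᶜ := h.2.2
    have hadj : (K.induce Sᶜ).Adj ⟨u, hx⟩ ⟨w, hw⟩ := h.1
    exact hadj.reachable.trans (ih hw hy)

private lemma induce_card [Finite V] (H : SimpleGraph V) (S : Finset V) :
    Nat.card (H.induce ((S : Set V)ᶜ)).ConnectedComponent + S.card ≤
      Nat.card (delS H ↑S).ConnectedComponent := by
  classical
  set ψ : H.induce ((S : Set V)ᶜ) →g delS H ↑S :=
    ⟨fun a => a.1, fun {a b} h => ⟨h, a.2, b.2⟩⟩ with hψ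
  set f : (H.induce ((S : Set V)ᶜ)).ConnectedComponent ⊕ {x // x ∈ S} →
      (delS H ↑S).ConnectedComponent :=
    Sum.elim (ConnectedComponent.map ψ)
      (fun s => (delS H ↑S).connectedComponentMk s.1) with hf
  have hinj : Function.Injective f := by
    rintro (c | s) (c' | s') h
    · revert h
      refine ConnectedComponent.ind₂ (fun a b h => ?_) c c'
      have hr : (delS H ↑S).Reachable a.1 b.1 := ConnectedComponent.exact h
      obtain ⟨p⟩ := hr
      have := delS_walk_reach p a.2 b.2
      simp only [Sum.inl.injEq]
      exact ConnectedComponent.sound (by simpa using this)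
    · exfalso
      revert h
      refine c.ind (fun a h => ?_)
      have hr : (delS H ↑S).Reachable a.1 s'.1 := ConnectedComponent.exact h
      have := delS_isolated (s'.2 : s'.1 ∈ (↑S : Set V)) hr.symm
      exact a.2 (this ▸ (s'.2 : s'.1 ∈ (↑S : Set V)))
    · exfalso
      revert h
      refine c'.ind (fun a h => ?_)
      have hr : (delS H ↑S).Reachable s.1 a.1 := ConnectedComponent.exact h
      have := delS_isolated (s.2 : s.1 ∈ (↑S : Set V)) hr
      exact a.2 (this ▸ (s.2 : s.1 ∈ (↑S : Set V)))
    · have hr : (delS H ↑S).Reachable s.1 s'.1 := ConnectedComponent.exact h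
      have := delS_isolated (s.2 : s.1 ∈ (↑S : Set V)) hr
      simp only [Sum.inr.injEq]
      exact Subtype.ext this
  have := Nat.card_le_card_of_injective f hinj
  rw [Nat.card_sum] at this
  have hS : Nat.card {x // x ∈ S} = S.card := by
    simp [Nat.card_eq_fintype_card]
  omega

private lemma key_bound {V : Type*} [Fintype V] [Nonempty V] (H : SimpleGraph V)
    (hH : ∀ v, (H.neighborSet v).ncard ≤ 2) (S : Finset V) :
    numComp H S ≤ Nat.card H.ConnectedComponent + S.card := by
  classical
  have h1 := induce_card H S
  have h2 := delS_card H hH S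
  unfold numComp
  omega

private lemma numComp_mono {V : Type*} [Fintype V] {H G : SimpleGraph V} (h : H ≤ G)
    (S : Finset V) : numComp G S ≤ numComp H S := by
  apply card_comp_le_of_le
  intro a b hab
  exact h hab

end Aux

theorem stmt2 {V : Type*} [Fintype V] [Nonempty V] (G : SimpleGraph V) :
    scStar G ≤ (pathCoverNumber G : ℤ) := by
  classical
  have hne : {k | ∃ H ≤ G, IsLinearForest H ∧ Nat.card H.ConnectedComponent = k}.Nonempty := by
    refine ⟨Nat.card (⊥ : SimpleGraph V).ConnectedComponent, ⊥, bot_le, ⟨?_, ?_⟩, rfl⟩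
    · exact isAcyclic_bot
    · intro v
      simp [SimpleGraph.neighborSet]
  obtain ⟨H, hHG, hLF, hk⟩ := Nat.sInf_mem hne
  unfold scStar
  apply Finset.sup'_le
  intro S _
  have hnat : numComp G S ≤ pathCoverNumber G + S.card := by
    calc numComp G S ≤ numComp H S := numComp_mono hHG S
      _ ≤ Nat.card H.ConnectedComponent + S.card := key_bound H hLF.2 S
      _ = pathCoverNumber G + S.card := by rw [hk]; rfl
  have : (numComp G S : ℤ) ≤ (pathCoverNumber G : ℤ) + S.card := by exact_mod_cast hnat
  omega
end

section
/- If G is a disjoint union of paths (a linear forest) with vertex set V(G) nonempty, then π(G) = sc*(G); that is, the path covering number equals the unrestricted scattering number. -/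
open SimpleGraph

/-! ### Auxiliary lemmas -/

lemma walk_transfer {W : Type*} {H : SimpleGraph W} {s : Set W} {a b : W}
    (p : H.Walk a b) (hp : ∀ x ∈ p.support, x ∈ s) :
    (H.induce s).Reachable ⟨a, hp a p.start_mem_support⟩ ⟨b, hp b p.end_mem_support⟩ := by
  induction p with
  | nil => rfl
  | cons h q ih =>
      refine Reachable.trans (Adj.reachable ?_) (ih (fun x hx => hp x (by simp [hx])))
      simpa using h

lemma exists_nbr {W : Type*} {H : SimpleGraph W} {v a : W} (p : H.Walk a v)
    (ha : a ≠ v) :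
    ∃ u, ∃ h : H.Adj v u,
      (H.induce ({v}ᶜ : Set W)).Reachable ⟨a, ha⟩ ⟨u, h.ne'⟩ := by
  induction p with
  | nil => exact absurd rfl ha
  | @cons w x v h q ih =>
      by_cases hx : x = v
      · subst hx
        exact ⟨w, h.symm, Reachable.refl _⟩
      · obtain ⟨u, hu, hr⟩ := ih hx
        refine ⟨u, hu, Reachable.trans (Adj.reachable ?_) hr⟩
        simpa [ha, hx] using h

lemma reach_induce_of_not_reach {W : Type*} {H : SimpleGraph W} {v a b : W}
    (hr : H.Reachable a b) (hv : ¬ H.Reachable a v) (ha : a ≠ v) (hb : b ≠ v) :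
    (H.induce ({v}ᶜ : Set W)).Reachable ⟨a, ha⟩ ⟨b, hb⟩ := by
  classical
  obtain ⟨p⟩ := hr
  have hvp : v ∉ p.support := by
    intro hmem
    exact hv ⟨p.takeUntil v hmem⟩
  exact walk_transfer p (fun x hx => by
    simp only [Set.mem_compl_iff, Set.mem_singleton_iff]
    rintro rfl; exact hvp hx)

lemma card_cc_delete_le {W : Type*} [Fintype W] (H : SimpleGraph W) (v : W)
    (hdeg : (H.neighborSet v).ncard ≤ 2) :
    Nat.card (H.induce ({v}ᶜ : Set W)).ConnectedComponent ≤
      Nat.card H.ConnectedComponent + 1 := by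
  classical
  set H' := H.induce ({v}ᶜ : Set W) with hH'
  have : Fintype H'.ConnectedComponent := Fintype.ofFinite _
  have : Fintype H.ConnectedComponent := Fintype.ofFinite _
  set f : H'.ConnectedComponent → H.ConnectedComponent :=
    ConnectedComponent.map (SimpleGraph.Embedding.induce ({v}ᶜ : Set W)).toHom with hf
  have fmk : ∀ (a : ({v}ᶜ : Set W)), f (H'.connectedComponentMk a) =
      H.connectedComponentMk a.1 := fun a => rfl
  -- every component in the fiber over `[v]` contains a neighbor of `v`
  have key : ∀ C : H'.ConnectedComponent, f C = H.connectedComponentMk v →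
      ∃ u ∈ H.neighborFinset v, ∃ h : u ∈ ({v}ᶜ : Set W),
        H'.connectedComponentMk ⟨u, h⟩ = C := by
    refine ConnectedComponent.ind (fun a hC => ?_)
    rw [fmk] at hC
    have hrv : H.Reachable a.1 v := (ConnectedComponent.eq.mp hC)
    have ha : a.1 ≠ v := a.2
    obtain ⟨p⟩ := hrv
    obtain ⟨u, hu, hr⟩ := exists_nbr p ha
    refine ⟨u, by simp [hu], hu.ne', ?_⟩
    exact (ConnectedComponent.sound hr.symm).trans (congrArg _ (Subtype.ext rfl))
  set F : Finset H'.ConnectedComponent :=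
    Finset.univ.filter (fun C => f C = H.connectedComponentMk v) with hF
  have hFcard : F.card ≤ 2 := by
    have : ∀ C ∈ F, ∃ u ∈ H.neighborFinset v, ∃ h : u ∈ ({v}ᶜ : Set W),
        H'.connectedComponentMk ⟨u, h⟩ = C := by
      intro C hC
      exact key C (by simpa [hF] using hC)
    choose g hg1 hg2 using this
    calc F.card ≤ (H.neighborFinset v).card := by
          refine Finset.card_le_card_of_injOn (fun C => if h : C ∈ F then g C h else v)
            (fun C hC => by simp only [Finset.mem_coe] at hC; simp only [dif_pos hC, Finset.mem_coe]; exact hg1 C hC) ?_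
          intro C₁ h₁ C₂ h₂ heq
          simp only [Finset.mem_coe] at h₁ h₂
          dsimp only at heq
          rw [dif_pos h₁, dif_pos h₂] at heq
          obtain ⟨m₁, e₁⟩ := hg2 C₁ h₁
          obtain ⟨m₂, e₂⟩ := hg2 C₂ h₂
          rw [← e₁, ← e₂]
          congr 1
          exact Subtype.ext heq
      _ ≤ 2 := by
          have hcoe : ((H.neighborFinset v : Finset W) : Set W) = H.neighborSet v := by
            ext; simp
          rw [← Set.ncard_coe_finset, hcoe]; exact hdeg
  -- off that fiber, `f` is injective
  have hinj : ∀ C₁ C₂ : H'.ConnectedComponent, f C₁ = f C₂ →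
      f C₁ ≠ H.connectedComponentMk v → C₁ = C₂ := by
    refine ConnectedComponent.ind₂ (fun a b hab hnv => ?_)
    rw [fmk] at hab hnv
    rw [fmk] at hab
    have hr : H.Reachable a.1 b.1 := ConnectedComponent.eq.mp hab
    have hv : ¬ H.Reachable a.1 v := fun h => hnv (ConnectedComponent.eq.mpr h)
    have := reach_induce_of_not_reach hr hv a.2 b.2
    exact ConnectedComponent.eq.mpr (by simpa using this)
  have hsplit : Fintype.card H'.ConnectedComponent = F.card + Fᶜ.card := by
    rw [Finset.card_add_card_compl]
  have hFc : Fᶜ.card ≤ Fintype.card H.ConnectedComponent - 1 := by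
    have : Fᶜ.card ≤ (Finset.univ.erase (H.connectedComponentMk v)).card := by
      refine Finset.card_le_card_of_injOn f (fun C hC => ?_) ?_
      · simp only [hF, Finset.mem_coe, Finset.mem_compl, Finset.mem_filter, Finset.mem_univ, true_and] at hC
        simp [hC]
      · intro C₁ h₁ C₂ h₂ heq
        simp only [Finset.mem_coe, hF, Finset.mem_compl, Finset.mem_filter, Finset.mem_univ,
          true_and] at h₁ h₂
        exact hinj C₁ C₂ heq h₁
    simpa [Finset.card_erase_of_mem] using this
  have hpos : 1 ≤ Fintype.card H.ConnectedComponent :=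
    Fintype.card_pos_iff.mpr ⟨H.connectedComponentMk v⟩
  rw [Nat.card_eq_fintype_card, Nat.card_eq_fintype_card]
  omega

/-- Removing one more vertex: iso between the two induced graphs. -/
def isoStep {V : Type*} [DecidableEq V] (G : SimpleGraph V) (S : Finset V) (v : V) (hv : v ∉ S) :
    G.induce ((↑(insert v S) : Set V)ᶜ) ≃g
      (G.induce ((↑S : Set V)ᶜ)).induce
        ({(⟨v, by simp [hv]⟩ : ((↑S : Set V)ᶜ : Set V))}ᶜ) where
  toFun u := ⟨⟨u.1, by
        have h := u.2
        simp only [Finset.coe_insert, Set.mem_compl_iff, Set.mem_insert_iff, not_or,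
          Finset.mem_coe] at h
        simpa using h.2⟩, by
        have h := u.2
        simp only [Finset.coe_insert, Set.mem_compl_iff, Set.mem_insert_iff, not_or,
          Finset.mem_coe] at h
        simp [Subtype.ext_iff, h.1]⟩
  invFun x := ⟨x.1.1, by
        have h1 : (x.1 : V) ∉ S := x.1.2
        have h2 : (x.1 : V) ≠ v := by
          have hx := x.2
          simp only [Set.mem_compl_iff, Set.mem_singleton_iff] at hx
          exact fun hh => hx (Subtype.ext hh)
        simp [h1, h2]⟩
  left_inv u := by ext; rfl
  right_inv x := by ext; rfl
  map_rel_iff' := by intro a b; simp [comap_adj]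

/-- Transport an induced subgraph along an equality of vertex sets. -/
def isoOfSetEq {V : Type*} (G : SimpleGraph V) {s t : Set V} (h : s = t) :
    G.induce s ≃g G.induce t := by subst h; rfl

lemma numComp_empty {V : Type*} [Fintype V] (G : SimpleGraph V) :
    numComp G (∅ : Finset V) = Nat.card G.ConnectedComponent := by
  have hs : ((↑(∅ : Finset V) : Set V))ᶜ = (Set.univ : Set V) := by simp
  exact Nat.card_congr (Iso.connectedComponentEquiv ((isoOfSetEq G hs).trans (induceUnivIso G)))

lemma numComp_le {V : Type*} [Fintype V] (G : SimpleGraph V)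
    (hdeg : ∀ v, (G.neighborSet v).ncard ≤ 2) (S : Finset V) :
    numComp G S ≤ Nat.card G.ConnectedComponent + S.card := by
  classical
  induction S using Finset.induction_on with
  | empty =>
      simp only [Finset.card_empty, add_zero]
      exact le_of_eq (numComp_empty G)
  | @insert v S hv ih =>
      have hvS : v ∈ ((↑S : Set V)ᶜ) := by simp [hv]
      have hd : ((G.induce ((↑S : Set V)ᶜ)).neighborSet ⟨v, hvS⟩).ncard ≤ 2 := by
        refine le_trans (Set.ncard_le_ncard_of_injOn Subtype.val (fun a haa => ?_)
          Subtype.val_injective.injOn (Set.toFinite _)) (hdeg v)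
        exact haa
      calc numComp G (insert v S)
          = Nat.card ((G.induce ((↑S : Set V)ᶜ)).induce
              ({(⟨v, hvS⟩ : ((↑S : Set V)ᶜ : Set V))}ᶜ)).ConnectedComponent :=
            Nat.card_congr (isoStep G S v hv).connectedComponentEquiv
        _ ≤ Nat.card (G.induce ((↑S : Set V)ᶜ)).ConnectedComponent + 1 :=
            card_cc_delete_le _ _ hd
        _ = numComp G S + 1 := rfl
        _ ≤ Nat.card G.ConnectedComponent + S.card + 1 := by omega
        _ = Nat.card G.ConnectedComponent + (insert v S).card := by
            rw [Finset.card_insert_of_notMem hv, Nat.add_assoc]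

lemma pathCover_eq {V : Type*} [Fintype V] (G : SimpleGraph V) (hG : IsLinearForest G) :
    pathCoverNumber G = Nat.card G.ConnectedComponent := by
  apply le_antisymm
  · exact Nat.sInf_le ⟨G, le_refl G, hG, rfl⟩
  · refine le_csInf ⟨_, G, le_refl G, hG, rfl⟩ ?_
    rintro k ⟨H, hH, -, rfl⟩
    exact Nat.card_le_card_of_surjective (ConnectedComponent.map (Hom.ofLE hH))
      (ConnectedComponent.ind fun w => ⟨H.connectedComponentMk w, rfl⟩)

theorem stmt7 {V : Type*} [Fintype V] [Nonempty V] (G : SimpleGraph V)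
    (hG : IsLinearForest G) :
    (pathCoverNumber G : ℤ) = scStar G := by
  classical
  have h2 := numComp_empty G
  rw [pathCover_eq G hG]
  unfold scStar
  apply le_antisymm
  · have h0 := Finset.le_sup' (fun S : Finset V => (numComp G S : ℤ) - S.card)
      (Finset.mem_univ (∅ : Finset V))
    simp only [h2, Finset.card_empty, Nat.cast_zero, sub_zero] at h0
    exact h0
  · refine Finset.sup'_le _ _ (fun S _ => ?_)
    have := numComp_le G hG.2 S
    omega
end
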